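/- Let k be a field of characteristic 2 and q = 2^e. Suppose u : k → SL(3,k) is defined by u(t) = [[1, a₁₂(t), a₁₃(t)], [0, 1, a₂₃(t)], [0, 0, 1]] with (a₁₂(T), a₁₃(T), a₂₃(T)) = (λT^q + μT^{2q}, νT^q + ξT^{2q}, 0) for λ,μ,ν,ξ ∈ k with λξ - μν ≠ 0. Then there exists P ∈ GL(3,k) such that P⁻¹ u(t) P = [[1, t^q, t^{2q}], [0,1,0], [0,0,1]] for all t ∈ k. -/
import Mathlib


/-- The map `t ↦ [[1, λ t^q + μ t^{2q}, ν t^q + ξ t^{2q}], [0, 1, 0], [0, 0, 1]]`. -/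
def u19 {k : Type*} [Field k] (lam mu nu xi : k) (q : ℕ) (t : k) : Matrix (Fin 3) (Fin 3) k :=
  !![1, lam * t ^ q + mu * t ^ (2 * q), nu * t ^ q + xi * t ^ (2 * q);
     0, 1, 0;
     0, 0, 1]

open Matrix in
theorem stmt_19 (k : Type*) [Field k] [CharP k 2] (e : ℕ) (lam mu nu xi : k)
    (h : lam * xi - mu * nu ≠ 0) :
    ∃ P : GL (Fin 3) k, ∀ t : k,
      ((P⁻¹ : GL (Fin 3) k) : Matrix (Fin 3) (Fin 3) k) * u19 lam mu nu xi (2 ^ e) t *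
          (P : Matrix (Fin 3) (Fin 3) k) =
        !![1, t ^ 2 ^ e, t ^ (2 * 2 ^ e); 0, 1, 0; 0, 0, 1] := by
  set D := lam * xi - mu * nu with hD
  refine ⟨⟨!![1, 0, 0; 0, xi / D, -nu / D; 0, -mu / D, lam / D],
          !![1, 0, 0; 0, lam, nu; 0, mu, xi], ?_, ?_⟩, ?_⟩
  · ext i j
    fin_cases i <;> fin_cases j <;>
      simp [Matrix.mul_apply, Fin.sum_univ_three, Matrix.vecHead, Matrix.vecTail] <;> field_simp <;> ring
  · ext i j
    fin_cases i <;> fin_cases j <;>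
      simp [Matrix.mul_apply, Fin.sum_univ_three, Matrix.vecHead, Matrix.vecTail] <;> field_simp <;> ring
  · intro t
    show (!![1, 0, 0; 0, lam, nu; 0, mu, xi] : Matrix (Fin 3) (Fin 3) k) *
        u19 lam mu nu xi (2 ^ e) t *
        !![1, 0, 0; 0, xi / D, -nu / D; 0, -mu / D, lam / D] = _
    ext i j
    fin_cases i <;> fin_cases j <;>
      simp [u19, Matrix.mul_apply, Fin.sum_univ_three, Matrix.vecHead, Matrix.vecTail] <;> field_simp <;> ring
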